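/- arXiv:2111.14389 — 3 statements merged into one kernel-verified Lean document; each statement's English description precedes it below -/
import Mathlib

section
/- For any algebraic number α over ℚ, there exists an integer k such that for every nonzero integer m, the degree of (α + k)^m over ℚ equals the degree of α over ℚ. -/
/-!
Write `β = α + k`; its conjugates over `ℚ` are the `y + k` with `y` a conjugate of `α`.
If no conjugate `γ ≠ β` satisfies `γ ^ n = β ^ n`, then `β` has no conjugate other than itself
over `ℚ(β ^ n)` (the minimal polynomial of `β` there divides `X ^ n - β ^ n`), so by
separability `ℚ(β ^ n) = ℚ(β)` and the degrees agree. For a conjugate `y ≠ α`, a collision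
`(α + k) ^ n = (y + k) ^ n` makes `(y + k) / (α + k)` a root of unity in the number field
`ℚ(α, y)`. There are finitely many of these and `k ↦ (y + k) / (α + k)` is injective, so only
finitely many `k` are bad.
-/

open Polynomial IntermediateField

namespace IntermediateField

section

variable {K L : Type*} [Field K] [Field L] [Algebra K L]

theorem adjoin_simple_inv (x : L) : K⟮x⁻¹⟯ = K⟮x⟯ :=
  le_antisymm (adjoin_simple_le_iff.mpr (inv_mem (mem_adjoin_simple_self K x)))
    (adjoin_simple_le_iff.mpr (by simpa using inv_mem (mem_adjoin_simple_self K x⁻¹)))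

theorem _root_.IsIntegral.zpow {x : L} (hx : IsIntegral K x) (m : ℤ) : IsIntegral K (x ^ m) := by
  obtain ⟨n, rfl | rfl⟩ := Int.eq_nat_or_neg m
  · simpa only [zpow_natCast] using hx.pow n
  · simpa only [zpow_neg, zpow_natCast] using (hx.pow n).inv

theorem natDegree_minpoly_eq_of_adjoin_simple_eq {x y : L} (hx : IsIntegral K x)
    (hy : IsIntegral K y) (h : K⟮x⟯ = K⟮y⟯) :
    (minpoly K x).natDegree = (minpoly K y).natDegree := by
  rw [← adjoin.finrank hx, ← adjoin.finrank hy, h]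

end

variable {K L : Type*} [Field K] [Field L] [Algebra K L] [IsAlgClosed L] [CharZero L]

theorem adjoin_simple_pow_eq_of_isConjRoot {x : L} (hx : IsIntegral K x) {n : ℕ}
    (H : ∀ y, IsConjRoot K x y → y ^ n = x ^ n → y = x) : K⟮x ^ n⟯ = K⟮x⟯ := by
  refine le_antisymm (adjoin_simple_le_iff.mpr (pow_mem (mem_adjoin_simple_self K x) n)) ?_
  have hxF : IsIntegral K⟮x ^ n⟯ x := hx.tower_top
  have hsep : IsSeparable K⟮x ^ n⟯ x := (minpoly.irreducible hxF).separable
  suffices x ∈ (⊥ : Subalgebra K⟮x ^ n⟯ L) by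
    obtain ⟨r, hr⟩ := Algebra.mem_bot.mp this
    have hrF : algebraMap K⟮x ^ n⟯ L r ∈ K⟮x ^ n⟯ := r.2
    rw [hr] at hrF
    exact adjoin_simple_le_iff.mpr hrF
  by_contra hbot
  obtain ⟨y, hne, hy⟩ :=
    (notMem_iff_exists_ne_and_isConjRoot hsep (IsAlgClosed.splits _)).mp hbot
  -- `y` is a root of `minpoly K⟮x ^ n⟯ x`, which divides `X ^ n - x ^ n`.
  have hpow : y ^ n = x ^ n := by
    have hdvd : minpoly K⟮x ^ n⟯ x ∣ X ^ n - C (AdjoinSimple.gen K (x ^ n)) :=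
      minpoly.dvd K⟮x ^ n⟯ x (by simp)
    simpa [sub_eq_zero] using
      Polynomial.eval₂_eq_zero_of_dvd_of_eval₂_eq_zero _ _ hdvd hy.aeval_eq_zero
  exact hne (H y (hy.of_isScalarTower hx) hpow).symm

theorem adjoin_simple_zpow_eq_of_isConjRoot {x : L} (hx : IsIntegral K x)
    (H : ∀ y, IsConjRoot K x y → ∀ n : ℕ, 0 < n → y ^ n = x ^ n → y = x) {m : ℤ} (hm : m ≠ 0) :
    K⟮x ^ m⟯ = K⟮x⟯ := by
  obtain ⟨n, rfl | rfl⟩ := Int.eq_nat_or_neg m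
  · have hn : 0 < n := by omega
    rw [zpow_natCast, adjoin_simple_pow_eq_of_isConjRoot hx fun y hy => H y hy n hn]
  · have hn : 0 < n := by omega
    rw [zpow_neg, zpow_natCast, adjoin_simple_inv,
      adjoin_simple_pow_eq_of_isConjRoot hx fun y hy => H y hy n hn]

end IntermediateField

theorem natDegree_minpoly_zpow_eq_of_isConjRoot {K L : Type*} [Field K] [Field L] [Algebra K L]
    [IsAlgClosed L] [CharZero L] {x : L} (hx : IsIntegral K x)
    (H : ∀ y, IsConjRoot K x y → ∀ n : ℕ, 0 < n → y ^ n = x ^ n → y = x) {m : ℤ} (hm : m ≠ 0) :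
    (minpoly K (x ^ m)).natDegree = (minpoly K x).natDegree :=
  natDegree_minpoly_eq_of_adjoin_simple_eq (hx.zpow m) hx
    (adjoin_simple_zpow_eq_of_isConjRoot hx H hm)

theorem natDegree_minpoly_add_algebraMap {K L : Type*} [Field K] [CommRing L] [Algebra K L]
    (x : L) (r : K) : (minpoly K (x + algebraMap K L r)).natDegree = (minpoly K x).natDegree := by
  rw [minpoly.add_algebraMap, natDegree_comp, natDegree_X_sub_C, mul_one]

theorem NumberField.finite_setOf_isOfFinOrder (K : Type*) [Field K] [NumberField K] :
    {x : K | IsOfFinOrder x}.Finite := by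
  refine (Embeddings.finite_of_norm_le K ℂ 1).subset fun x hx => ⟨?_, fun φ => ?_⟩
  · obtain ⟨n, hn, hxn⟩ := isOfFinOrder_iff_pow_eq_one.mp hx
    exact IsIntegral.of_pow hn (hxn ▸ isIntegral_one)
  · exact (φ.toMonoidHom.isOfFinOrder hx).norm_eq_one.le

theorem finite_setOf_add_intCast_pow_eq {L : Type*} [Field L] [CharZero L] {a b : L}
    (ha : IsIntegral ℚ a) (hb : IsIntegral ℚ b) (hab : a ≠ b) :
    {k : ℤ | ∃ n : ℕ, 0 < n ∧ (a + k) ^ n = (b + k) ^ n}.Finite := by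
  let E := ℚ⟮a, b⟯
  have : FiniteDimensional ℚ E := finiteDimensional_adjoin_pair ha hb
  have : NumberField E := ⟨⟩
  have hval_inj : Function.Injective (E.val : E →* L) := Subtype.val_injective
  have hne : ∀ k : ℤ, ∀ n : ℕ, 0 < n → (a + k) ^ n = (b + k) ^ n → a + k ≠ 0 := by
    intro k n hn h hak
    rw [hak, zero_pow hn.ne', eq_comm, pow_eq_zero_iff hn.ne'] at h
    exact hab (by linear_combination hak - h)
  refine Set.Finite.of_injOn (f := fun k : ℤ => (b + k) / (a + k))
    (t := (↑) '' {x : E | IsOfFinOrder x}) ?_ ?_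
    ((NumberField.finite_setOf_isOfFinOrder E).image _)
  · rintro k ⟨n, hn, h⟩
    have hmem : (b + k) / (a + k) ∈ E := by
      have hA : a ∈ E := subset_adjoin ℚ _ (by simp)
      have hB : b ∈ E := subset_adjoin ℚ _ (by simp)
      exact div_mem (add_mem hB (intCast_mem E k)) (add_mem hA (intCast_mem E k))
    refine ⟨⟨_, hmem⟩, (hval_inj.isOfFinOrder_iff).mp ?_, rfl⟩
    refine isOfFinOrder_iff_pow_eq_one.mpr ⟨n, hn, ?_⟩
    show ((b + k) / (a + k)) ^ n = 1
    rw [div_pow, ← h, div_self (pow_ne_zero n (hne k n hn h))]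
  · rintro k ⟨n, hn, h⟩ k' ⟨n', hn', h'⟩ heq
    have h0 := hne k n hn h
    have h0' := hne k' n' hn' h'
    simp only at heq
    rw [div_eq_div_iff h0 h0'] at heq
    have hprod : (b - a) * ((k : L) - k') = 0 := by linear_combination -heq
    exact_mod_cast sub_eq_zero.mp
      ((mul_eq_zero.mp hprod).resolve_left (sub_ne_zero.mpr hab.symm))

theorem stmt_1 (α : ℂ) (hα : IsAlgebraic ℚ α) :
    ∃ k : ℤ, ∀ m : ℤ, m ≠ 0 →
      (minpoly ℚ ((α + (k : ℂ)) ^ m)).natDegree = (minpoly ℚ α).natDegree := by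
  have hint := hα.isIntegral
  have hconj (y : ℂ) : IsConjRoot ℚ α y ↔ y ∈ (minpoly ℚ α).rootSet ℂ :=
    isConjRoot_iff_mem_minpoly_rootSet hint
  have hbad : (⋃ y ∈ (minpoly ℚ α).rootSet ℂ \ {α},
      {k : ℤ | ∃ n : ℕ, 0 < n ∧ (α + k) ^ n = (y + k) ^ n}).Finite :=
    ((minpoly ℚ α).rootSet_finite ℂ).sdiff.biUnion fun y hy =>
      finite_setOf_add_intCast_pow_eq hint (((hconj y).mpr hy.1).isIntegral hint)
        (Ne.symm hy.2)
  obtain ⟨k, hk⟩ := hbad.infinite_compl.nonempty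
  have hkq : (k : ℂ) = algebraMap ℚ ℂ k := by simp
  refine ⟨k, fun m hm => ?_⟩
  rw [natDegree_minpoly_zpow_eq_of_isConjRoot (hkq ▸ hint.add isIntegral_algebraMap) ?_ hm,
    hkq, natDegree_minpoly_add_algebraMap]
  intro z hz n hn hzn
  by_contra hne
  have hz' : IsConjRoot ℚ α (z - k) := by
    simpa using hz.sub_algebraMap (k : ℚ)
  refine hk (Set.mem_biUnion (x := z - k) ⟨(hconj _).mp hz', ?_⟩
    ⟨n, hn, by rw [sub_add_cancel, hzn]⟩)
  rintro rfl
  exact hne (by simp)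
end

section
/- Let α be an algebraic number of degree d with conjugates α₁, …, α_d, and suppose m > 1 is such that α^m has degree less than d. Then there exist indices i ≠ j and an m-th root of unity ζ ≠ 1 such that α_i = ζ·α_j. -/
/-!
Every conjugate `β` of `α` is a root of `minpoly (α ^ m) ∘ X ^ m`, so `β ↦ β ^ m` maps the `d`
distinct conjugates of `α` into the fewer than `d` conjugates of `α ^ m`. By pigeonhole two
distinct conjugates `β ≠ γ` have `β ^ m = γ ^ m`, and `ζ = β / γ` is the required root of unity.
-/

open Polynomial

section Conjugates

variable {K A L : Type*} [Field K] [CommRing A] [Algebra K A] [Field L] [Algebra K L]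

theorem minpoly_dvd_comp_X_pow (x : A) (m : ℕ) :
    minpoly K x ∣ (minpoly K (x ^ m)).comp (X ^ m) :=
  minpoly.dvd K x <| by simp only [aeval_comp, map_pow, aeval_X, minpoly.aeval]

theorem aeval_pow_minpoly_pow_eq_zero {x : A} {y : L} (m : ℕ)
    (hy : aeval y (minpoly K x) = 0) :
    aeval (y ^ m) (minpoly K (x ^ m)) = 0 := by
  obtain ⟨r, hr⟩ := minpoly_dvd_comp_X_pow (K := K) x m
  have h := congrArg (aeval y) hr
  rwa [map_mul, hy, zero_mul, aeval_comp, map_pow, aeval_X] at h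

theorem ncard_rootSet_minpoly [PerfectField K] [IsAlgClosed L] {x : L} (hx : IsIntegral K x) :
    ((minpoly K x).rootSet L).ncard = (minpoly K x).natDegree := by
  rw [Set.ncard_eq_toFinset_card', Set.toFinset_card,
    card_rootSet_eq_natDegree (PerfectField.separable_of_irreducible (minpoly.irreducible hx))
      (IsAlgClosed.splits _)]

theorem exists_ne_aeval_minpoly_eq_zero_pow_eq [PerfectField K] [IsAlgClosed L] {x : L}
    (hx : IsIntegral K x) {m : ℕ}
    (hlt : (minpoly K (x ^ m)).natDegree < (minpoly K x).natDegree) :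
    ∃ β γ : L, β ≠ γ ∧ aeval β (minpoly K x) = 0 ∧ aeval γ (minpoly K x) = 0 ∧
      β ^ m = γ ^ m := by
  have hcard : ((minpoly K (x ^ m)).rootSet L).ncard < ((minpoly K x).rootSet L).ncard :=
    (ncard_rootSet_le _ L).trans_lt (ncard_rootSet_minpoly hx ▸ hlt)
  obtain ⟨β, hβ, γ, hγ, hne, hpow⟩ := Set.exists_ne_map_eq_of_ncard_lt_of_maps_to hcard
    (f := (· ^ m)) fun y hy => (mem_rootSet.2 ⟨minpoly.ne_zero (hx.pow m),
      aeval_pow_minpoly_pow_eq_zero m (mem_rootSet.1 hy).2⟩)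
  exact ⟨β, γ, hne, (mem_rootSet.1 hβ).2, (mem_rootSet.1 hγ).2, hpow⟩

end Conjugates

theorem exists_pow_eq_one_ne_one_eq_mul_of_pow_eq {F : Type*} [Field F] {β γ : F} {m : ℕ}
    (hm : m ≠ 0) (hne : β ≠ γ) (hpow : β ^ m = γ ^ m) :
    ∃ ζ : F, ζ ^ m = 1 ∧ ζ ≠ 1 ∧ β = ζ * γ := by
  have hγ : γ ≠ 0 := by
    rintro rfl
    exact hne (pow_eq_zero_iff hm |>.1 (hpow.trans (zero_pow hm)))
  refine ⟨β / γ, by rw [div_pow, hpow, div_self (pow_ne_zero m hγ)], ?_, ?_⟩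
  · rwa [Ne, div_eq_one_iff_eq hγ]
  · rw [div_mul_cancel₀ β hγ]

theorem stmt_2 (α : ℂ) (hα : IsAlgebraic ℚ α) (d : ℕ)
    (hd : (minpoly ℚ α).natDegree = d) (m : ℕ) (hm : 1 < m)
    (hlt : (minpoly ℚ (α ^ m)).natDegree < d) :
    ∃ β γ : ℂ, β ≠ γ ∧
      Polynomial.aeval β (minpoly ℚ α) = 0 ∧
      Polynomial.aeval γ (minpoly ℚ α) = 0 ∧
      ∃ ζ : ℂ, ζ ^ m = 1 ∧ ζ ≠ 1 ∧ β = ζ * γ := by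
  obtain ⟨β, γ, hne, hβ, hγ, hpow⟩ :=
    exists_ne_aeval_minpoly_eq_zero_pow_eq hα.isIntegral (hd ▸ hlt)
  exact ⟨β, γ, hne, hβ, hγ,
    exists_pow_eq_one_ne_one_eq_mul_of_pow_eq (by omega) hne hpow⟩
end

section
/- Let α be an algebraic number whose minimal polynomial over ℚ has roots that are pairwise not related by multiplication by a root of unity (i.e., α_i/α_j is not a root of unity for i ≠ j). Then α has uniform degree: for every nonzero integer m, deg(α^m) = deg(α). -/
open Polynomial IntermediateField

theorem stmt_19 (α : ℂ) (hα : IsAlgebraic ℚ α)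
    (hnoroot : ∀ β γ : ℂ, Polynomial.aeval β (minpoly ℚ α) = 0 →
      Polynomial.aeval γ (minpoly ℚ α) = 0 → β ≠ γ →
      ∀ n : ℕ, 0 < n → (β / γ) ^ n ≠ 1) :
    ∀ m : ℤ, m ≠ 0 → (minpoly ℚ (α ^ m)).natDegree = (minpoly ℚ α).natDegree := by
  intro m hm
  rcases eq_or_ne α 0 with rfl | hα0
  · rw [zero_zpow m hm]
  have hint : IsIntegral ℚ α := hα.isIntegral
  haveI : FiniteDimensional ℚ ℚ⟮α⟯ := IntermediateField.adjoin.finiteDimensional hint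
  set g : ℚ⟮α⟯ := IntermediateField.AdjoinSimple.gen ℚ α ^ m with hg
  have hmapg : algebraMap ℚ⟮α⟯ ℂ g = α ^ m := by
    rw [hg, map_zpow₀, IntermediateField.AdjoinSimple.algebraMap_gen]
  have hintg : IsIntegral ℚ g := IsIntegral.of_finite ℚ g
  have hintm : IsIntegral ℚ (α ^ m) := hmapg ▸ hintg.algebraMap
  -- roots of minpoly α are nonzero
  have hroot_ne : ∀ β : ℂ, Polynomial.aeval β (minpoly ℚ α) = 0 → β ≠ 0 := by
    intro β hβ hβ0
    apply minpoly.coeff_zero_ne_zero hint hα0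
    have h2 : algebraMap ℚ ℂ ((minpoly ℚ α).coeff 0) = 0 := by
      subst hβ0
      rw [← Polynomial.eval₂_at_zero, ← Polynomial.aeval_def]
      exact hβ
    exact (map_eq_zero_iff _ (algebraMap ℚ ℂ).injective).mp h2
  -- upper bound
  have hle : (minpoly ℚ (α ^ m)).natDegree ≤ (minpoly ℚ α).natDegree := by
    rw [← IntermediateField.adjoin.finrank hint, ← IntermediateField.adjoin.finrank hintm]
    have hsub : ℚ⟮α ^ m⟯ ≤ ℚ⟮α⟯ := by
      rw [IntermediateField.adjoin_simple_le_iff]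
      exact zpow_mem (IntermediateField.mem_adjoin_simple_self ℚ α) m
    haveI : Module.Finite ℚ (Subalgebra.toSubmodule ℚ⟮α⟯.toSubalgebra) :=
      (inferInstance : FiniteDimensional ℚ ℚ⟮α⟯)
    exact Submodule.finrank_mono
      (show Subalgebra.toSubmodule ℚ⟮α ^ m⟯.toSubalgebra ≤ Subalgebra.toSubmodule ℚ⟮α⟯.toSubalgebra
        from hsub)
  -- lower bound via root counting
  have hsep1 : (minpoly ℚ α).Separable := (minpoly.irreducible hint).separable
  have hsep2 : (minpoly ℚ (α ^ m)).Separable := (minpoly.irreducible hintm).separable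
  have hcard1 : Fintype.card ((minpoly ℚ α).rootSet ℂ) = (minpoly ℚ α).natDegree :=
    Polynomial.card_rootSet_eq_natDegree hsep1 (IsAlgClosed.splits _)
  have hcard2 : Fintype.card ((minpoly ℚ (α ^ m)).rootSet ℂ) = (minpoly ℚ (α ^ m)).natDegree :=
    Polynomial.card_rootSet_eq_natDegree hsep2 (IsAlgClosed.splits _)
  -- membership of β ^ m in rootSet of minpoly (α ^ m)
  have hmem : ∀ β : ℂ, β ∈ (minpoly ℚ α).rootSet ℂ →
      (β : ℂ) ^ m ∈ (minpoly ℚ (α ^ m)).rootSet ℂ := by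
    intro β hβ
    have hβ' : β ∈ (minpoly ℚ α).aroots ℂ := by
      rwa [Polynomial.mem_rootSet, ← Polynomial.mem_aroots] at hβ
    set σ : ℚ⟮α⟯ →ₐ[ℚ] ℂ := (IntermediateField.algHomAdjoinIntegralEquiv ℚ hint).symm ⟨β, hβ'⟩
      with hσ
    have hσgen : σ (IntermediateField.AdjoinSimple.gen ℚ α) = β :=
      IntermediateField.algHomAdjoinIntegralEquiv_symm_apply_gen ℚ hint ⟨β, hβ'⟩
    have hσg : σ g = β ^ m := by rw [hg, map_zpow₀, hσgen]
    have hgroot : Polynomial.aeval g (minpoly ℚ (α ^ m)) = 0 := by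
      have h0 : algebraMap ℚ⟮α⟯ ℂ (Polynomial.aeval g (minpoly ℚ (α ^ m))) = 0 := by
        rw [← Polynomial.aeval_algebraMap_apply, hmapg, minpoly.aeval]
      exact (map_eq_zero_iff _ (algebraMap ℚ⟮α⟯ ℂ).injective).mp h0
    rw [Polynomial.mem_rootSet]
    refine ⟨minpoly.ne_zero hintm, ?_⟩
    rw [← hσg, Polynomial.aeval_algHom_apply, hgroot, map_zero]
  -- injectivity
  have hinj : Function.Injective (fun β : (minpoly ℚ α).rootSet ℂ =>
      (⟨(β : ℂ) ^ m, hmem β β.2⟩ : (minpoly ℚ (α ^ m)).rootSet ℂ)) := by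
    rintro ⟨β, hβ⟩ ⟨γ, hγ⟩ h
    have hβ0 : Polynomial.aeval β (minpoly ℚ α) = 0 := (Polynomial.mem_rootSet.mp hβ).2
    have hγ0 : Polynomial.aeval γ (minpoly ℚ α) = 0 := (Polynomial.mem_rootSet.mp hγ).2
    have hpow : β ^ m = γ ^ m := congrArg Subtype.val h
    by_contra hne
    have hne' : β ≠ γ := fun h' => hne (by simpa using h')
    have hγne : γ ≠ 0 := hroot_ne γ hγ0
    have hx : (β / γ) ^ m = 1 := by
      rw [div_zpow, hpow, div_self (zpow_ne_zero m hγne)]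
    have hxn : (β / γ) ^ (m.natAbs) = 1 := by
      rcases Int.natAbs_eq m with h' | h'
      · rw [← zpow_natCast, ← h', hx]
      · rw [← zpow_natCast]
        have : (β / γ) ^ (-(m.natAbs : ℤ)) = 1 := by rw [← h', hx]
        rw [zpow_neg] at this
        exact inv_eq_one.mp this
    exact hnoroot β γ hβ0 hγ0 hne' m.natAbs (Int.natAbs_pos.mpr hm) hxn
  have hge : (minpoly ℚ α).natDegree ≤ (minpoly ℚ (α ^ m)).natDegree := by
    rw [← hcard1, ← hcard2]
    exact Fintype.card_le_of_injective _ hinj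
  exact le_antisymm hle hge
end
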